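/- arXiv:2408.03696 — 4 statements merged into one kernel-verified Lean document; each statement's English description precedes it below -/
import Mathlib

section
/- Let τ_1,…,τ_n be periodic tasks indexed by priority (τ_1 highest, τ_n lowest) scheduled on one processor by non-preemptive fixed-priority scheduling, with arbitrary phases. Fix k ∈ {1,…,n}. If there exists a real t with 0 ≤ t ≤ D_k such that t ≥ C_k + max_{i>k} C_i + Σ_{i<k} ⌈t/T_i⌉·C_i (the maximum taken to be 0 when k = n), then in every resulting schedule every job of τ_k completes within t time units of its release; in particular the worst-case response time R_k of τ_k is at most t. -/
open scoped BigOperators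

/-- A set of `n` periodic tasks: worst-case execution times `C`, periods `T`,
relative deadlines `D` (constrained, i.e. `D i ≤ T i`), and phases `phase`. -/
structure PeriodicTaskSet (n : ℕ) where
  C : Fin n → ℝ
  T : Fin n → ℝ
  D : Fin n → ℝ
  phase : Fin n → ℝ
  C_pos : ∀ i, 0 < C i
  T_pos : ∀ i, 0 < T i
  D_pos : ∀ i, 0 < D i
  D_le_T : ∀ i, D i ≤ T i
  phase_nonneg : ∀ i, 0 ≤ phase i

namespace PeriodicTaskSet

variable {n : ℕ}

/-- A job is a pair (task index, job index); the `k`-th job of task `i` is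
released at time `phase i + k * T i`. -/
def release (ts : PeriodicTaskSet n) (j : Fin n × ℕ) : ℝ :=
  ts.phase j.1 + j.2 * ts.T j.1

/-- `S` assigns to every job its (unique, non-preemptive) start time; the job
`j` then executes continuously during `[S j, S j + C j.1]`.
`IsNPSchedule ts S` states that `S` is a valid non-preemptive, work-conserving
uniprocessor schedule:
* every job starts no earlier than its release time;
* execution intervals of distinct jobs do not overlap (one processor,
  no preemption);
* work conservation: at no instant can the processor be idle while some
  released job has not yet started (equivalently, whenever a job completes or
  a job is released while the processor is idle, some released unfinished job
  is immediately running). -/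
structure IsNPSchedule (ts : PeriodicTaskSet n) (S : Fin n × ℕ → ℝ) : Prop where
  start_after_release : ∀ j, ts.release j ≤ S j
  nonoverlap : ∀ j j', j ≠ j' →
    S j + ts.C j.1 ≤ S j' ∨ S j' + ts.C j'.1 ≤ S j
  work_conserving : ∀ (t : ℝ) (j : Fin n × ℕ), ts.release j ≤ t → t < S j →
    ∃ j', S j' ≤ t ∧ t < S j' + ts.C j'.1

/-- Non-preemptive fixed-priority scheduling (task `0` has the highest
priority, task `n-1` the lowest): whenever a job starts, it has the smallest
task index among all jobs that are released and not yet started. -/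
def IsFP (ts : PeriodicTaskSet n) (S : Fin n × ℕ → ℝ) : Prop :=
  ∀ j j' : Fin n × ℕ, ts.release j' ≤ S j → S j < S j' → (j.1 : ℕ) ≤ (j'.1 : ℕ)

end PeriodicTaskSet

private lemma natcount (φ T a t : ℝ) (hT : 0 < T) (ht : 0 ≤ t) (s : Finset ℕ)
    (h : ∀ q ∈ s, a ≤ φ + q * T ∧ φ + q * T < a + t) :
    s.card ≤ (⌈t / T⌉).toNat := by
  rcases s.eq_empty_or_nonempty with rfl | hs
  · simp
  have hq0 := s.min'_mem hs
  have hceil : t / T ≤ ((⌈t / T⌉).toNat : ℝ) := by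
    have h0 : (0:ℤ) ≤ ⌈t / T⌉ := Int.ceil_nonneg (div_nonneg ht hT.le)
    have h1 : ((⌈t / T⌉).toNat : ℝ) = ((⌈t / T⌉ : ℤ) : ℝ) := by
      exact_mod_cast congrArg (fun z : ℤ => (z : ℝ)) (Int.toNat_of_nonneg h0)
    rw [h1]; exact Int.le_ceil _
  have hsub : s ⊆ Finset.Ico (s.min' hs) (s.min' hs + (⌈t / T⌉).toNat) := by
    intro q hq
    rw [Finset.mem_Ico]
    refine ⟨s.min'_le q hq, ?_⟩
    have h1 := (h q hq).2
    have h2 := (h (s.min' hs) hq0).1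
    have h3 : ((q:ℝ) - (s.min' hs : ℕ)) * T < t := by nlinarith
    have h4 : (q:ℝ) < ((s.min' hs : ℕ) : ℝ) + ((⌈t / T⌉).toNat : ℝ) := by
      have h5 := (lt_div_iff₀ hT).mpr h3
      linarith [hceil]
    exact_mod_cast h4
  have := Finset.card_le_card hsub
  rwa [Nat.card_Ico, Nat.add_sub_cancel_left] at this


open MeasureTheory

set_option maxHeartbeats 2000000

/-- **Non-preemptive FP response-time bound.**
If there is a `t` with `0 ≤ t ≤ D k` and
`t ≥ C k + max_{i>k} C i + ∑_{i<k} ⌈t/T i⌉ * C i`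
(the maximum over the empty set being `0`, as `sSup ∅ = 0` in `ℝ`), then in
every non-preemptive fixed-priority schedule, for arbitrary phases, every job
of task `k` completes within `t` time units of its release; in particular the
worst-case response time of `τ k` is at most `t`. -/
theorem np_fp_response_time_bound {n : ℕ} (ts : PeriodicTaskSet n) (k : Fin n)
    (t : ℝ) (ht0 : 0 ≤ t) (htD : t ≤ ts.D k)
    (hrec : ts.C k + sSup (ts.C '' {i | k < i}) +
        ∑ i ∈ Finset.univ.filter (fun i : Fin n => i < k),
          (⌈t / ts.T i⌉ : ℝ) * ts.C i ≤ t) :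
    ∀ S : Fin n × ℕ → ℝ, ts.IsNPSchedule S → ts.IsFP S →
      ∀ m : ℕ, S (k, m) + ts.C k ≤ ts.release (k, m) + t := by
  classical
  intro S hS hFP m
  by_contra hcon
  push_neg at hcon
  set r := ts.release (k, m) with hrdef
  set sk := S (k, m) with hskdef
  have hC := ts.C_pos
  have hT := ts.T_pos
  -- blocking bound B
  set B := sSup (ts.C '' {i | k < i}) with hBdef
  have hBdd : BddAbove (ts.C '' {i | k < i}) :=
    (Set.toFinite {i : Fin n | k < i}).image ts.C |>.bddAbove
  have hCB : ∀ i : Fin n, k < i → ts.C i ≤ B := fun i hi =>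
    le_csSup hBdd ⟨i, hi, rfl⟩
  have hB0 : 0 ≤ B := by
    rcases Set.eq_empty_or_nonempty {i : Fin n | k < i} with he | ⟨i, hi⟩
    · rw [hBdef, he, Set.image_empty, Real.sSup_empty]
    · exact le_trans (hC i).le (hCB i hi)
  set Sig := ∑ i ∈ Finset.univ.filter (fun i : Fin n => i < k),
      (⌈t / ts.T i⌉ : ℝ) * ts.C i with hSigdef
  have hSig0 : 0 ≤ Sig := by
    refine Finset.sum_nonneg fun i _ => mul_nonneg ?_ (hC i).le
    exact_mod_cast Int.ceil_nonneg (div_nonneg ht0 (hT i).le)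
  have htpos : 0 < t := lt_of_lt_of_le (by linarith [hC k]) hrec
  have hrel0 : ∀ j : Fin n × ℕ, 0 ≤ ts.release j := fun j =>
    add_nonneg (ts.phase_nonneg _) (mul_nonneg (Nat.cast_nonneg _) (hT _).le)
  -- quiet times
  set Q : Set ℝ := {u | u ≤ r ∧ ∀ j : Fin n × ℕ, (j.1 : ℕ) ≤ (k : ℕ) →
      ts.release j < u → S j + ts.C j.1 ≤ u} with hQdef
  have hQ0 : (0:ℝ) ∈ Q :=
    ⟨hrel0 _, fun j _ hj => absurd hj (not_lt.mpr (hrel0 j))⟩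
  have hQbdd : BddAbove Q := ⟨r, fun u hu => hu.1⟩
  set t0 := sSup Q with ht0def
  have ht0r : t0 ≤ r := csSup_le ⟨0, hQ0⟩ (fun u hu => hu.1)
  have hqt0 : ∀ j : Fin n × ℕ, (j.1 : ℕ) ≤ (k : ℕ) → ts.release j < t0 →
      S j + ts.C j.1 ≤ t0 := by
    intro j hjk hjrel
    obtain ⟨u, huQ, hu⟩ := exists_lt_of_lt_csSup ⟨0, hQ0⟩ hjrel
    exact le_trans (huQ.2 j hjk hu) (le_csSup hQbdd huQ)
  have hnq : ∀ u, t0 < u → u ≤ r →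
      ∃ j : Fin n × ℕ, (j.1 : ℕ) ≤ (k : ℕ) ∧ ts.release j < u ∧
        u < S j + ts.C j.1 := by
    intro u h1 h2
    by_contra h
    push_neg at h
    exact absurd (le_csSup hQbdd ⟨h2, h⟩) (not_le.mpr h1)
  -- the processor is busy throughout (t0, sk + C k)
  have hbusy : ∀ v, t0 < v → v < sk + ts.C k →
      ∃ j, S j ≤ v ∧ v < S j + ts.C j.1 := by
    intro v h1 h2
    rcases le_or_gt sk v with hsv | hvs
    · exact ⟨(k, m), hsv, h2⟩
    rcases le_or_gt r v with hrv | hvr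
    · exact hS.work_conserving v (k, m) hrv hvs
    by_contra hnb
    push_neg at hnb
    have hvQ : v ∈ Q := by
      refine ⟨hvr.le, fun j _ hjrel => ?_⟩
      rcases le_or_gt (S j) v with h3 | h3
      · exact hnb j h3
      · obtain ⟨j', h4, h5⟩ := hS.work_conserving v j hjrel.le h3
        exact absurd h5 (not_lt.mpr (hnb j' h4))
    exact absurd (le_csSup hQbdd hvQ) (not_le.mpr h1)
  have hsr : r ≤ sk := hS.start_after_release (k, m)
  -- THE CORE COUNTING LEMMA
  have core : ∀ js : Fin n × ℕ, (js.1 : ℕ) ≤ (k : ℕ) →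
      ts.release js < t0 + t → t0 + t < S js + ts.C js.1 →
      t0 + t ≤ sk + ts.C k → False := by
    intro js hjsk hjsrel hjsinc huf
    set u := t0 + t with hudef
    have hkne : (Finset.univ : Finset (Fin n)).Nonempty := ⟨k, Finset.mem_univ k⟩
    set Tmin := Finset.univ.inf' hkne ts.T with hTmindef
    have hTmin0 : 0 < Tmin := by
      rw [hTmindef, Finset.lt_inf'_iff]
      exact fun i _ => hT i
    have hTminle : ∀ i, Tmin ≤ ts.T i := fun i => Finset.inf'_le _ (Finset.mem_univ i)
    set M := ⌈u / Tmin⌉₊ with hMdef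
    set G : Finset (Fin n × ℕ) :=
      (Finset.univ ×ˢ Finset.range M).filter
        (fun j => S j < u ∧ t0 < S j + ts.C j.1) with hGdef
    set G' := insert js G with hG'def
    -- every job executing in (t0, u) is in G
    have hexec : ∀ v, t0 < v → v < u →
        ∃ j ∈ G, S j ≤ v ∧ v < S j + ts.C j.1 := by
      intro v h1 h2
      obtain ⟨j, h3, h4⟩ := hbusy v h1 (lt_of_lt_of_le h2 huf)
      have hj2 : j.2 < M := by
        have hb1 : (j.2 : ℝ) * Tmin ≤ ts.release j := by
          have := mul_le_mul_of_nonneg_left (hTminle j.1) (Nat.cast_nonneg j.2)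
          have hph := ts.phase_nonneg j.1
          simp only [PeriodicTaskSet.release]
          nlinarith
        have hb2 : (j.2 : ℝ) * Tmin < u :=
          lt_of_le_of_lt hb1 (lt_of_le_of_lt (hS.start_after_release j)
            (lt_of_le_of_lt h3 h2))
        have hb3 : (j.2 : ℝ) < u / Tmin := (lt_div_iff₀ hTmin0).mpr hb2
        exact Nat.lt_ceil.mpr hb3
      refine ⟨j, ?_, h3, h4⟩
      rw [hGdef, Finset.mem_filter]
      exact ⟨Finset.mem_product.mpr ⟨Finset.mem_univ _, Finset.mem_range.mpr hj2⟩,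
        lt_of_le_of_lt h3 h2, lt_trans h1 h4⟩
    -- the measure-theoretic covering
    set W := Set.Ioo t0 u with hWdef
    set g : Fin n × ℕ → ℝ :=
      fun j => (volume (Set.Ico (S j) (S j + ts.C j.1) ∩ W)).toReal with hgdef
    have hvolfin : ∀ j : Fin n × ℕ,
        volume (Set.Ico (S j) (S j + ts.C j.1) ∩ W) ≠ ⊤ := by
      intro j
      refine ne_top_of_le_ne_top ?_ (measure_mono Set.inter_subset_left)
      rw [Real.volume_Ico]; exact ENNReal.ofReal_ne_top
    have hcover : W ⊆ ⋃ j ∈ G', Set.Ico (S j) (S j + ts.C j.1) ∩ W := by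
      intro v hv
      obtain ⟨j, hjG, h3, h4⟩ := hexec v hv.1 hv.2
      exact Set.mem_biUnion (by rw [hG'def]; exact Finset.mem_insert_of_mem hjG)
        ⟨⟨h3, h4⟩, hv⟩
    have hdisj : (↑G' : Set (Fin n × ℕ)).PairwiseDisjoint
        (fun j => Set.Ico (S j) (S j + ts.C j.1) ∩ W) := by
      intro a _ b _ hab
      have hno := hS.nonoverlap a b hab
      refine Set.disjoint_left.mpr fun x hxa hxb => ?_
      rcases hno with h | h
      · exact absurd (lt_of_lt_of_le hxa.1.2 h) (not_lt.mpr hxb.1.1)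
      · exact absurd (lt_of_lt_of_le hxb.1.2 h) (not_lt.mpr hxa.1.1)
    have htle : t ≤ ∑ j ∈ G', g j := by
      have hsum : ENNReal.ofReal t ≤ ∑ j ∈ G', ENNReal.ofReal (g j) := by
        calc ENNReal.ofReal t = volume W := by
              rw [hWdef, Real.volume_Ioo]
              congr 1
              ring
          _ ≤ volume (⋃ j ∈ G', Set.Ico (S j) (S j + ts.C j.1) ∩ W) :=
              measure_mono hcover
          _ = ∑ j ∈ G', volume (Set.Ico (S j) (S j + ts.C j.1) ∩ W) :=
              measure_biUnion_finset hdisj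
                (fun j _ => measurableSet_Ico.inter measurableSet_Ioo)
          _ = ∑ j ∈ G', ENNReal.ofReal (g j) := by
              refine Finset.sum_congr rfl fun j _ => ?_
              rw [hgdef]
              exact (ENNReal.ofReal_toReal (hvolfin j)).symm
      rw [← ENNReal.ofReal_sum_of_nonneg (fun j _ => ENNReal.toReal_nonneg)] at hsum
      exact (ENNReal.ofReal_le_ofReal_iff
        (Finset.sum_nonneg fun j _ => ENNReal.toReal_nonneg)).mp hsum
    -- bounds on g
    have hgsub : ∀ (j : Fin n × ℕ) (a b : ℝ),
        (Set.Ico (S j) (S j + ts.C j.1) ∩ W) ⊆ Set.Ico a b →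
        g j ≤ max (b - a) 0 := by
      intro j a b hsub
      have h1 := measure_mono (μ := volume) hsub
      rw [Real.volume_Ico] at h1
      have h2 := ENNReal.toReal_mono ENNReal.ofReal_ne_top h1
      rwa [ENNReal.toReal_ofReal'] at h2
    have hgC : ∀ j : Fin n × ℕ, g j ≤ ts.C j.1 := by
      intro j
      have := hgsub j (S j) (S j + ts.C j.1) Set.inter_subset_left
      have hCeq : S j + ts.C j.1 - S j = ts.C j.1 := by ring
      rw [hCeq] at this
      exact le_trans this (max_le le_rfl (hC j.1).le)
    have hgnn : ∀ j : Fin n × ℕ, 0 ≤ g j := fun j => ENNReal.toReal_nonneg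
    -- release of any high-priority job still incomplete after t0 is ≥ t0
    have hrelge : ∀ j : Fin n × ℕ, (j.1 : ℕ) ≤ (k : ℕ) →
        t0 < S j + ts.C j.1 → t0 ≤ ts.release j := by
      intro j h1 h2
      by_contra h3
      exact absurd (hqt0 j h1 (not_le.mp h3)) (not_le.mpr h2)
    -- lower-priority jobs executing in the window started before t0
    have hlowstart : ∀ j ∈ G, k < j.1 → S j ≤ t0 := by
      intro j hjG hjk
      rw [hGdef, Finset.mem_filter] at hjG
      obtain ⟨-, hSu, hSC⟩ := hjG
      have hjkn : (k : ℕ) < (j.1 : ℕ) := hjk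
      have hjne : j ≠ (k, m) := by
        intro h
        rw [h] at hjkn
        exact lt_irrefl _ hjkn
      have hSs : S j < sk := by
        rcases lt_or_ge (S j) sk with h | h
        · exact h
        · rcases hS.nonoverlap j (k, m) hjne with h2 | h2
          · linarith [hC j.1]
          · have h2' : sk + ts.C k ≤ S j := h2
            linarith
      by_contra h3
      push_neg at h3
      rcases le_or_gt r (S j) with h4 | h4
      · have h5 : (j.1 : ℕ) ≤ ((k, m).1 : ℕ) := hFP j (k, m) h4 hSs
        exact absurd h5 (by simpa using not_le.mpr hjkn)
      · obtain ⟨j2, hj2k, hj2rel, hj2inc⟩ := hnq (S j) h3 h4.le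
        have hne2 : j2 ≠ j := by
          intro h
          rw [h] at hj2k
          omega
        rcases hS.nonoverlap j2 j hne2 with h6 | h6
        · exact absurd hj2inc (not_lt.mpr h6)
        · have hSj2 : S j2 ≤ S j := by
            by_contra h5
            push_neg at h5
            have := hFP j j2 hj2rel.le h5
            omega
          linarith [hC j.1]
    have hlowuniq : ∀ j ∈ G', ∀ j' ∈ G', k < j.1 → k < j'.1 → j = j' := by
      have hmem : ∀ j ∈ G', k < j.1 → S j ≤ t0 ∧ t0 < S j + ts.C j.1 := by
        intro j hj hjk
        rcases Finset.mem_insert.mp (by rwa [hG'def] at hj) with rfl | hjG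
        · have : (k : ℕ) < (j.1 : ℕ) := hjk
          omega
        · refine ⟨hlowstart j hjG hjk, ?_⟩
          rw [hGdef, Finset.mem_filter] at hjG
          exact hjG.2.2
      intro j hj j' hj' h1 h2
      by_contra hne
      obtain ⟨ha1, ha2⟩ := hmem j hj h1
      obtain ⟨hb1, hb2⟩ := hmem j' hj' h2
      rcases hS.nonoverlap j j' hne with h | h
      · linarith
      · linarith
    -- split the sum into lower-priority part and high/equal part
    set A := G'.filter (fun j => ¬ k < j.1) with hAdef
    set L := G'.filter (fun j => k < j.1) with hLdef
    have hsplit : ∑ j ∈ G', g j = ∑ j ∈ L, g j + ∑ j ∈ A, g j :=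
      (Finset.sum_filter_add_sum_filter_not G' _ g).symm
    have hLB : ∑ j ∈ L, g j ≤ B := by
      rcases L.eq_empty_or_nonempty with he | ⟨a, ha⟩
      · rw [he]; simpa using hB0
      · have hmemL : ∀ x ∈ L, x ∈ G' ∧ k < x.1 := by
          intro x hx
          rw [hLdef] at hx
          exact Finset.mem_filter.mp hx
        have hLa : L = {a} := by
          refine Finset.eq_singleton_iff_unique_mem.mpr ⟨ha, fun x hx => ?_⟩
          obtain ⟨hx1, hx2⟩ := hmemL x hx
          obtain ⟨ha1, ha2⟩ := hmemL a ha
          exact hlowuniq x hx1 a ha1 hx2 ha2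
        rw [hLa, Finset.sum_singleton]
        obtain ⟨ha1, ha2⟩ := hmemL a ha
        have haG : a ∈ G := by
          rcases Finset.mem_insert.mp (by rwa [hG'def] at ha1) with rfl | h
          · have : (k : ℕ) < (a.1 : ℕ) := ha2
            omega
          · exact h
        have hstart := hlowstart a haG ha2
        have hsub : (Set.Ico (S a) (S a + ts.C a.1) ∩ W) ⊆
            Set.Ico t0 (S a + ts.C a.1) :=
          fun x hx => ⟨hx.2.1.le, hx.1.2⟩
        refine le_trans (hgsub a t0 (S a + ts.C a.1) hsub) (max_le ?_ hB0)
        linarith [hCB a.1 ha2]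
    -- fiberwise decomposition of the high/equal part
    have hAfib : ∑ j ∈ A, g j =
        ∑ i ∈ Finset.univ.filter (fun i : Fin n => i ≤ k),
          ∑ j ∈ A.filter (fun j => j.1 = i), g j := by
      refine (Finset.sum_fiberwise_of_maps_to (fun j hj => ?_) g).symm
      rw [Finset.mem_filter]
      exact ⟨Finset.mem_univ _, not_lt.mp (Finset.mem_filter.mp hj).2⟩
    have hArel : ∀ j ∈ A, t0 ≤ ts.release j ∧ ts.release j < u := by
      intro j hj
      obtain ⟨hjG', hjk⟩ := Finset.mem_filter.mp hj
      have hjkn : (j.1 : ℕ) ≤ (k : ℕ) := not_lt.mp hjk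
      rcases Finset.mem_insert.mp (by rwa [hG'def] at hjG') with rfl | hjG
      · exact ⟨hrelge _ hjsk (by linarith), hjsrel⟩
      · rw [hGdef, Finset.mem_filter] at hjG
        obtain ⟨-, hSu, hSC⟩ := hjG
        exact ⟨hrelge j hjkn hSC, lt_of_le_of_lt (hS.start_after_release j) hSu⟩
    have hfibcard : ∀ i : Fin n,
        (A.filter (fun j => j.1 = i)).card ≤ (⌈t / ts.T i⌉).toNat := by
      intro i
      have hinj : Set.InjOn Prod.snd
          ((A.filter (fun j => j.1 = i) : Finset (Fin n × ℕ)) : Set (Fin n × ℕ)) := by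
        intro x hx y hy hxy
        have hx1 : x.1 = i := (Finset.mem_filter.mp hx).2
        have hy1 : y.1 = i := (Finset.mem_filter.mp hy).2
        exact Prod.ext (hx1.trans hy1.symm) hxy
      rw [← Finset.card_image_of_injOn hinj]
      refine natcount (ts.phase i) (ts.T i) t0 t (hT i) htpos.le _ fun q hq => ?_
      obtain ⟨j, hj, rfl⟩ := Finset.mem_image.mp hq
      obtain ⟨hjA, hji⟩ := Finset.mem_filter.mp hj
      have hrel : ts.release j = ts.phase i + (j.2 : ℝ) * ts.T i := by
        rw [PeriodicTaskSet.release, hji]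
      obtain ⟨hr1, hr2⟩ := hArel j hjA
      rw [hrel] at hr1 hr2
      exact ⟨hr1, by rw [hudef] at hr2; linarith⟩
    have hfible : ∀ i : Fin n, ∑ j ∈ A.filter (fun j => j.1 = i), g j ≤
        ((⌈t / ts.T i⌉).toNat : ℝ) * ts.C i := by
      intro i
      calc ∑ j ∈ A.filter (fun j => j.1 = i), g j
          ≤ (A.filter (fun j => j.1 = i)).card • ts.C i := by
            refine Finset.sum_le_card_nsmul _ _ _ fun j hj => ?_
            rw [← (Finset.mem_filter.mp hj).2]
            exact hgC j
        _ = ((A.filter (fun j => j.1 = i)).card : ℝ) * ts.C i := nsmul_eq_mul _ _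
        _ ≤ ((⌈t / ts.T i⌉).toNat : ℝ) * ts.C i := by
            refine mul_le_mul_of_nonneg_right ?_ (hC i).le
            exact_mod_cast hfibcard i
    -- the strict bound on the fiber of js
    have hstar_mem : js ∈ A.filter (fun j => j.1 = js.1) := by
      rw [Finset.mem_filter, hAdef, Finset.mem_filter]
      refine ⟨⟨?_, ?_⟩, rfl⟩
      · rw [hG'def]; exact Finset.mem_insert_self _ _
      · intro h
        have : (k : ℕ) < (js.1 : ℕ) := h
        omega
    have hgstar : g js < ts.C js.1 := by
      have hsub : (Set.Ico (S js) (S js + ts.C js.1) ∩ W) ⊆ Set.Ico (S js) u :=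
        fun x hx => ⟨hx.1.1, hx.2.2⟩
      refine lt_of_le_of_lt (hgsub js (S js) u hsub) (max_lt ?_ (hC js.1))
      linarith
    have hfiblt : ∑ j ∈ A.filter (fun j => j.1 = js.1), g j <
        ((⌈t / ts.T js.1⌉).toNat : ℝ) * ts.C js.1 := by
      set Fi := A.filter (fun j => j.1 = js.1) with hFidef
      have h1 : ∑ j ∈ Fi, g j = g js + ∑ j ∈ Fi.erase js, g j :=
        (Finset.add_sum_erase Fi g hstar_mem).symm
      have h2 : ∑ j ∈ Fi.erase js, g j ≤ ((Fi.erase js).card : ℝ) * ts.C js.1 := by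
        calc ∑ j ∈ Fi.erase js, g j ≤ (Fi.erase js).card • ts.C js.1 := by
              refine Finset.sum_le_card_nsmul _ _ _ fun j hj => ?_
              have hji : j.1 = js.1 :=
                (Finset.mem_filter.mp (Finset.mem_of_mem_erase hj)).2
              rw [← hji]; exact hgC j
          _ = _ := nsmul_eq_mul _ _
      have h3 : (Fi.erase js).card = Fi.card - 1 := Finset.card_erase_of_mem hstar_mem
      have h4 : 1 ≤ Fi.card := Finset.card_pos.mpr ⟨js, hstar_mem⟩
      have h5 : Fi.card ≤ (⌈t / ts.T js.1⌉).toNat := hfibcard js.1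
      have hcast : ((Fi.erase js).card : ℝ) = (Fi.card : ℝ) - 1 := by
        rw [h3, Nat.cast_sub h4, Nat.cast_one]
      have h6 : ((Fi.card : ℝ) - 1) * ts.C js.1 ≤
          (((⌈t / ts.T js.1⌉).toNat : ℝ) - 1) * ts.C js.1 := by
        refine mul_le_mul_of_nonneg_right ?_ (hC js.1).le
        have : (Fi.card : ℝ) ≤ ((⌈t / ts.T js.1⌉).toNat : ℝ) := by exact_mod_cast h5
        linarith
      rw [h1]
      rw [hcast] at h2
      nlinarith [hgstar, hC js.1]
    -- total high/equal part
    have hAlt : ∑ j ∈ A, g j <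
        ∑ i ∈ Finset.univ.filter (fun i : Fin n => i ≤ k),
          ((⌈t / ts.T i⌉).toNat : ℝ) * ts.C i := by
      rw [hAfib]
      refine Finset.sum_lt_sum (fun i _ => hfible i) ⟨js.1, ?_, hfiblt⟩
      rw [Finset.mem_filter]
      exact ⟨Finset.mem_univ _, by omega⟩
    -- evaluate the per-task bound sum
    have hsum_eq : ∑ i ∈ Finset.univ.filter (fun i : Fin n => i ≤ k),
        ((⌈t / ts.T i⌉).toNat : ℝ) * ts.C i = ts.C k + Sig := by
      have hins : Finset.univ.filter (fun i : Fin n => i ≤ k) =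
          insert k (Finset.univ.filter (fun i : Fin n => i < k)) := by
        ext i
        simp only [Finset.mem_filter, Finset.mem_univ, true_and, Finset.mem_insert]
        constructor
        · intro h
          rcases h.lt_or_eq with h | h
          · exact Or.inr h
          · exact Or.inl h
        · rintro (rfl | h)
          · exact le_refl _
          · exact h.le
      rw [hins, Finset.sum_insert (by simp)]
      congr 1
      · have hck : ⌈t / ts.T k⌉ = 1 := by
          have hle : t / ts.T k ≤ 1 :=
            (div_le_one (hT k)).mpr (le_trans htD (ts.D_le_T k))
          have hpos : (0 : ℝ) < t / ts.T k := div_pos htpos (hT k)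
          have h1 : ⌈t / ts.T k⌉ ≤ 1 := Int.ceil_le.mpr (by exact_mod_cast hle)
          have h2 : 0 < ⌈t / ts.T k⌉ := Int.ceil_pos.mpr hpos
          omega
        rw [hck]
        norm_num
      · rw [hSigdef]
        refine Finset.sum_congr rfl fun i hi => ?_
        congr 1
        have h0 : (0:ℤ) ≤ ⌈t / ts.T i⌉ := Int.ceil_nonneg (div_nonneg ht0 (hT i).le)
        exact_mod_cast congrArg (fun z : ℤ => (z : ℝ)) (Int.toNat_of_nonneg h0)
    have : t < B + (ts.C k + Sig) := by
      calc t ≤ ∑ j ∈ G', g j := htle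
        _ = ∑ j ∈ L, g j + ∑ j ∈ A, g j := hsplit
        _ < B + (ts.C k + Sig) := by
            rw [← hsum_eq]
            exact add_lt_add_of_le_of_lt hLB hAlt
    linarith [hrec]
  -- Step A : r < t0 + t
  have hrt0 : r < t0 + t := by
    by_contra hA
    push_neg at hA
    obtain ⟨j, hj1, hj2, hj3⟩ := hnq (t0 + t) (by linarith) hA
    exact core j hj1 hj2 hj3 (by linarith [hC k])
  -- Step B : apply the core lemma to (k, m) itself
  exact core (k, m) (le_refl _) hrt0 (by linarith) (by linarith)
end

section
/- Let τ_1,…,τ_n be periodic tasks indexed by priority (τ_1 highest, τ_n lowest) scheduled on one processor by non-preemptive fixed-priority scheduling, with arbitrary phases. If for every k ∈ {1,…,n} there exists a real t_k with 0 ≤ t_k ≤ D_k such that t_k ≥ C_k + max_{i>k} C_i + Σ_{i<k} ⌈t_k/T_i⌉·C_i (the maximum taken to be 0 when k = n), then the task set is schedulable: in every resulting schedule, for every phase vector, every job of every task completes no later than its absolute deadline. -/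
open scoped BigOperators

private lemma count_le {T lo ℓ φ : ℝ} (hT : 0 < T) (hℓ : 0 ≤ ℓ) (A : Finset ℕ)
    (hA : ∀ m ∈ A, lo ≤ φ + (m:ℝ) * T ∧ φ + (m:ℝ) * T < lo + ℓ) :
    (A.card : ℝ) ≤ ((⌈ℓ / T⌉ : ℤ) : ℝ) := by
  have hq0 : (0:ℤ) ≤ ⌈ℓ / T⌉ := Int.ceil_nonneg (div_nonneg hℓ hT.le)
  rcases A.eq_empty_or_nonempty with rfl | hne
  · simp only [Finset.card_empty, Nat.cast_zero]
    exact_mod_cast hq0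
  · set q := (⌈ℓ / T⌉).toNat with hqdef
    have hqR : (ℓ / T) ≤ (q : ℝ) := by
      have h := Int.le_ceil (ℓ / T)
      rw [← Int.toNat_of_nonneg hq0] at h
      exact_mod_cast h
    have hℓq : ℓ ≤ (q:ℝ) * T := by
      rw [div_le_iff₀ hT] at hqR; linarith
    have hsub : A ⊆ Finset.Ico (A.min' hne) (A.min' hne + q) := by
      intro m hm
      refine Finset.mem_Ico.2 ⟨A.min'_le m hm, ?_⟩
      have h1 := hA m hm
      have h2 := hA _ (A.min'_mem hne)
      have hmr : ((m:ℝ) - (A.min' hne : ℝ)) * T < (q:ℝ) * T := by nlinarith [h1.2, h2.1]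
      have h3 : ((m:ℝ) - (A.min' hne:ℝ)) < (q:ℝ) := lt_of_mul_lt_mul_right hmr hT.le
      have h4 : (m:ℝ) < ((A.min' hne + q : ℕ) : ℝ) := by push_cast; linarith
      exact_mod_cast h4
    have hcard := Finset.card_le_card hsub
    rw [Nat.card_Ico, Nat.add_sub_cancel_left] at hcard
    have : (A.card : ℝ) ≤ (q : ℝ) := by exact_mod_cast hcard
    have hq : ((q:ℤ):ℝ) = ((⌈ℓ / T⌉ : ℤ) : ℝ) := by rw [Int.toNat_of_nonneg hq0]
    push_cast at hq ⊢
    linarith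

private lemma fresh_release {T lo t φ : ℝ} (hT : 0 < T) (ht : 0 < t) (A : Finset ℕ) (m₁ : ℕ)
    (hm₁ : φ + (m₁:ℝ) * T = lo + t)
    (hA : ∀ m ∈ A, lo ≤ φ + (m:ℝ) * T ∧ φ + (m:ℝ) * T < lo + t)
    (hcard : ((⌈t / T⌉ : ℤ):ℝ) ≤ A.card) :
    ∃ m ∈ A, φ + (m:ℝ) * T ≤ lo := by
  by_contra hno
  push_neg at hno
  have hqpos : (0:ℤ) < ⌈t / T⌉ := Int.ceil_pos.2 (div_pos ht hT)
  set q := (⌈t / T⌉).toNat with hqdef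
  have hq1 : 1 ≤ q := by omega
  have hqR : (t / T) ≤ (q : ℝ) := by
    have h := Int.le_ceil (t / T)
    rw [← Int.toNat_of_nonneg hqpos.le] at h
    exact_mod_cast h
  have htq : t ≤ (q:ℝ) * T := by rw [div_le_iff₀ hT] at hqR; linarith
  have hcards : q ≤ A.card := by
    have h : ((q:ℤ):ℝ) ≤ (A.card:ℝ) := by rw [Int.toNat_of_nonneg hqpos.le]; exact_mod_cast hcard
    exact_mod_cast h
  have hsub : A ⊆ Finset.Ico (m₁ + 1 - q) m₁ := by
    intro m hm
    have h1 := hA m hm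
    have h2 := hno m hm
    have hmm : m < m₁ := by
      have hmul : (m:ℝ) * T < (m₁:ℝ) * T := by nlinarith [h1.2]
      exact_mod_cast lt_of_mul_lt_mul_right hmul hT.le
    have hlow : m₁ < m + q := by
      have h3 : ((m₁:ℝ) - (m:ℝ)) * T < t := by nlinarith
      have h4 : ((m₁:ℝ) - (m:ℝ)) * T < (q:ℝ) * T := by linarith
      have h5 : ((m₁:ℝ) - (m:ℝ)) < (q:ℝ) := lt_of_mul_lt_mul_right h4 hT.le
      have h6 : (m₁:ℝ) < ((m + q : ℕ):ℝ) := by push_cast; linarith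
      exact_mod_cast h6
    exact Finset.mem_Ico.2 ⟨by omega, hmm⟩
  have := Finset.card_le_card hsub
  rw [Nat.card_Ico] at this
  omega

private lemma vol_cover {ι : Type*} (s : Finset ι) (f g : ι → ℝ) (w v : ℝ)
    (hfg : ∀ i ∈ s, f i ≤ g i)
    (hcov : Set.Ioo w v ⊆ ⋃ i ∈ s, Set.Ico (f i) (g i)) :
    v - w ≤ ∑ i ∈ s, (g i - f i) := by
  have hnn : ∀ i ∈ s, 0 ≤ g i - f i := fun i hi => sub_nonneg.2 (hfg i hi)
  rcases le_or_gt v w with h | h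
  · exact le_trans (by linarith) (Finset.sum_nonneg hnn)
  · have h1 : MeasureTheory.volume (Set.Ioo w v) ≤
        ∑ i ∈ s, MeasureTheory.volume (Set.Ico (f i) (g i)) :=
      le_trans (MeasureTheory.measure_mono hcov) (MeasureTheory.measure_biUnion_finset_le _ _)
    rw [Real.volume_Ioo] at h1
    have h2 : ∑ i ∈ s, MeasureTheory.volume (Set.Ico (f i) (g i)) =
        ENNReal.ofReal (∑ i ∈ s, (g i - f i)) := by
      rw [ENNReal.ofReal_sum_of_nonneg hnn]
      exact Finset.sum_congr rfl fun i _ => Real.volume_Ico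
    rw [h2] at h1
    exact (ENNReal.ofReal_le_ofReal_iff (Finset.sum_nonneg hnn)).1 h1

set_option maxHeartbeats 1000000 in
private lemma main_step {n : ℕ} (ts : PeriodicTaskSet n)
    (h : ∀ k : Fin n, ∃ t : ℝ, 0 ≤ t ∧ t ≤ ts.D k ∧
        ts.C k + sSup (ts.C '' {i | k < i}) +
          ∑ i ∈ Finset.univ.filter (fun i : Fin n => i < k),
            (⌈t / ts.T i⌉ : ℝ) * ts.C i ≤ t)
    (S : Fin n × ℕ → ℝ) (hsch : ts.IsNPSchedule S) (hfp : ts.IsFP S)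
    (j : Fin n × ℕ)
    (IH : ∀ j', S j' < S j → S j' + ts.C j'.1 ≤ ts.release j' + ts.D j'.1) :
    S j + ts.C j.1 ≤ ts.release j + ts.D j.1 := by
  classical
  obtain ⟨t, ht0, htD, htest⟩ := h j.1
  -- basic facts
  have hCk : 0 < ts.C j.1 := ts.C_pos _
  set Cmax := sSup (ts.C '' {i | j.1 < i}) with hCmaxdef
  have hCmax0 : 0 ≤ Cmax := Real.sSup_nonneg (by rintro x ⟨i, _, rfl⟩; exact (ts.C_pos i).le)
  have hCmaxle : ∀ i : Fin n, (j.1:ℕ) < (i:ℕ) → ts.C i ≤ Cmax := by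
    intro i hi
    exact le_csSup (Set.Finite.bddAbove ((Set.toFinite _).image _)) ⟨i, hi, rfl⟩
  have hSig0 : 0 ≤ ∑ i ∈ Finset.univ.filter (fun i : Fin n => i < j.1),
      (⌈t / ts.T i⌉ : ℝ) * ts.C i :=
    Finset.sum_nonneg (fun i _ => mul_nonneg
      (by exact_mod_cast Int.ceil_nonneg (div_nonneg ht0 (ts.T_pos i).le)) (ts.C_pos i).le)
  have htCk : ts.C j.1 + Cmax ≤ t := by linarith
  have hrel0 : ∀ j' : Fin n × ℕ, 0 ≤ ts.release j' := fun j' =>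
    add_nonneg (ts.phase_nonneg _) (mul_nonneg (Nat.cast_nonneg _) (ts.T_pos _).le)
  by_contra hcon
  push_neg at hcon
  have hs : ts.release j + (t - ts.C j.1) < S j := by linarith
  set r := ts.release j with hrdef
  set s := S j with hsdef
  have hrls : r < s := by linarith
  -- higher-priority quiet times
  have hQ0 : (0:ℝ) ≤ r ∧ ∀ j'' : Fin n × ℕ, (j''.1:ℕ) < (j.1:ℕ) → ts.release j'' < 0 →
      S j'' + ts.C j''.1 ≤ 0 := ⟨hrel0 j, fun j'' _ hlt => absurd hlt (not_lt.2 (hrel0 j''))⟩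
  set Q : Set ℝ := {v | v ≤ r ∧ ∀ j'' : Fin n × ℕ, (j''.1:ℕ) < (j.1:ℕ) →
      ts.release j'' < v → S j'' + ts.C j''.1 ≤ v} with hQdef
  have hQne : Q.Nonempty := ⟨0, hQ0.1, hQ0.2⟩
  have hQbdd : BddAbove Q := ⟨r, fun v hv => hv.1⟩
  set b := sSup Q with hbdef
  have hbr : b ≤ r := csSup_le hQne (fun v hv => hv.1)
  have hQleb : ∀ v ∈ Q, v ≤ b := fun v hv => le_csSup hQbdd hv
  have hbq : ∀ j'' : Fin n × ℕ, (j''.1:ℕ) < (j.1:ℕ) → ts.release j'' < b →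
      S j'' + ts.C j''.1 ≤ b := by
    intro j'' h1 h2
    obtain ⟨v, hv, hv2⟩ := exists_lt_of_lt_csSup hQne h2
    exact (hv.2 j'' h1 hv2).trans (hQleb v hv)
  -- busy interval
  have busy : ∀ x, b < x → x < s → ∃ j', S j' ≤ x ∧ x < S j' + ts.C j'.1 := by
    intro x hbx hxs
    rcases le_or_gt x r with hxr | hrx
    · have hnq : ¬ (∀ j'' : Fin n × ℕ, (j''.1:ℕ) < (j.1:ℕ) → ts.release j'' < x →
          S j'' + ts.C j''.1 ≤ x) := by
        intro hq
        exact absurd (hQleb x ⟨hxr, hq⟩) (not_le.2 hbx)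
      push_neg at hnq
      obtain ⟨j'', h1, h2, h3⟩ := hnq
      rcases le_or_gt (S j'') x with h4 | h4
      · exact ⟨j'', h4, h3⟩
      · exact hsch.work_conserving x j'' h2.le h4
    · exact hsch.work_conserving x j hrx.le hxs
  -- start of a job of priority ≥ k is an hp-quiet point
  have start_quiet : ∀ j₀ : Fin n × ℕ, (j.1:ℕ) ≤ (j₀.1:ℕ) →
      ∀ j'' : Fin n × ℕ, (j''.1:ℕ) < (j.1:ℕ) → ts.release j'' < S j₀ →
      S j'' + ts.C j''.1 ≤ S j₀ := by
    intro j₀ hk0 j'' h1 h2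
    have hne : j'' ≠ j₀ := by
      intro he; rw [he] at h1; omega
    rcases lt_trichotomy (S j'') (S j₀) with h3 | h3 | h3
    · rcases hsch.nonoverlap j'' j₀ hne with h4 | h4
      · exact h4
      · exfalso; have := ts.C_pos j₀.1; linarith
    · exfalso
      rcases hsch.nonoverlap j'' j₀ hne with h4 | h4
      · have := ts.C_pos j''.1; linarith
      · have := ts.C_pos j₀.1; linarith
    · exact absurd (hfp j₀ j'' h2.le h3) (by omega)
  -- no job of priority ≥ k (other than j) starts in (b, min s (r+t))
  have noStart : ∀ j₀ : Fin n × ℕ, j₀ ≠ j → (j.1:ℕ) ≤ (j₀.1:ℕ) → b < S j₀ → S j₀ < s →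
      S j₀ < r + t → False := by
    intro j₀ hne hk0 hb0 hs0 hrt0
    rcases le_or_gt (S j₀) r with h1 | h1
    · exact absurd (hQleb _ ⟨h1, start_quiet j₀ hk0⟩) (not_le.2 hb0)
    · rcases lt_or_eq_of_le hk0 with h2 | h2
      · exact absurd (hfp j₀ j h1.le hs0) (by omega)
      · have hfst : j₀.1 = j.1 := Fin.val_injective h2.symm
        have hsnd : j₀.2 ≠ j.2 := fun hsnd => hne (Prod.ext hfst hsnd)
        have hrelj₀ : ts.release j₀ = ts.phase j.1 + (j₀.2:ℝ) * ts.T j.1 := by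
          rw [PeriodicTaskSet.release, hfst]
        have hrelj : r = ts.phase j.1 + (j.2:ℝ) * ts.T j.1 := rfl
        have hTk := ts.T_pos j.1
        rcases lt_or_gt_of_ne hsnd with h3 | h3
        · -- earlier job of the same task, finished by r by IH
          have hIH := IH j₀ hs0
          have hmul : ((j₀.2:ℝ) + 1) * ts.T j.1 ≤ (j.2:ℝ) * ts.T j.1 := by
            apply mul_le_mul_of_nonneg_right _ hTk.le
            exact_mod_cast Nat.succ_le_of_lt h3
          have hre : ts.release j₀ + ts.T j.1 ≤ r := by
            rw [hrelj₀, hrelj]; nlinarith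
          have hD : ts.D j₀.1 ≤ ts.T j.1 := by rw [← hfst]; exact ts.D_le_T j₀.1
          have hC := ts.C_pos j₀.1
          linarith
        · -- later job: not yet released
          have hmul : ((j.2:ℝ) + 1) * ts.T j.1 ≤ (j₀.2:ℝ) * ts.T j.1 := by
            apply mul_le_mul_of_nonneg_right _ hTk.le
            exact_mod_cast Nat.succ_le_of_lt h3
          have hre : r + ts.T j.1 ≤ ts.release j₀ := by
            rw [hrelj₀, hrelj]; nlinarith
          have hsar := hsch.start_after_release j₀
          have hDT := ts.D_le_T j.1
          linarith
  -- crosser data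
  obtain ⟨w, lo, hlob, hbw, hwrC, hB₁, hK⟩ :
      ∃ w lo : ℝ, lo ≤ b ∧ b ≤ w ∧ w ≤ r + Cmax ∧
        (∀ j₀ : Fin n × ℕ, j₀ ≠ j → (j.1:ℕ) ≤ (j₀.1:ℕ) → S j₀ ≤ b →
          b < S j₀ + ts.C j₀.1 → S j₀ + ts.C j₀.1 ≤ w) ∧
        (lo + ts.C j.1 + Cmax ≤ w →
          ∃ c : Fin n × ℕ, c ≠ j ∧ c.1 = j.1 ∧ S c = lo ∧ w = lo + ts.C j.1 ∧ b < w) := by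
    by_cases hc : ∃ c : Fin n × ℕ, c ≠ j ∧ (j.1:ℕ) ≤ (c.1:ℕ) ∧ S c ≤ b ∧ b < S c + ts.C c.1
    · obtain ⟨c, hc1, hc2, hc3, hc4⟩ := hc
      have huniq : ∀ j₀ : Fin n × ℕ, j₀ ≠ j → (j.1:ℕ) ≤ (j₀.1:ℕ) → S j₀ ≤ b →
          b < S j₀ + ts.C j₀.1 → j₀ = c := by
        intro j₀ _ _ h3 h4
        by_contra hne
        rcases hsch.nonoverlap j₀ c hne with h5 | h5 <;> linarith
      rcases lt_or_eq_of_le hc2 with hgt | heq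
      · -- lower-priority crosser
        have hCc : ts.C c.1 ≤ Cmax := hCmaxle c.1 hgt
        refine ⟨S c + ts.C c.1, b, le_refl b, hc4.le, by linarith, ?_, ?_⟩
        · intro j₀ h1 h2 h3 h4; rw [huniq j₀ h1 h2 h3 h4]
        · intro habs; exfalso; linarith
      · -- same-task crosser
        have hfst : c.1 = j.1 := Fin.val_injective heq.symm
        have hsnd : c.2 ≠ j.2 := fun hsnd => hc1 (Prod.ext hfst hsnd)
        have hTk := ts.T_pos j.1
        have hrelc : ts.release c = ts.phase j.1 + (c.2:ℝ) * ts.T j.1 := by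
          rw [PeriodicTaskSet.release, hfst]
        have hrelj : r = ts.phase j.1 + (j.2:ℝ) * ts.T j.1 := rfl
        have hlt : c.2 < j.2 := by
          rcases lt_or_gt_of_ne hsnd with h3 | h3
          · exact h3
          · exfalso
            have hmul : ((j.2:ℝ) + 1) * ts.T j.1 ≤ (c.2:ℝ) * ts.T j.1 := by
              apply mul_le_mul_of_nonneg_right _ hTk.le
              exact_mod_cast Nat.succ_le_of_lt h3
            have hre : r + ts.T j.1 ≤ ts.release c := by rw [hrelc, hrelj]; nlinarith
            have hsar := hsch.start_after_release c
            linarith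
        have hIHc := IH c (by linarith [hc3, hbr, hrls] : S c < S j)
        have hmul : ((c.2:ℝ) + 1) * ts.T j.1 ≤ (j.2:ℝ) * ts.T j.1 := by
          apply mul_le_mul_of_nonneg_right _ hTk.le
          exact_mod_cast Nat.succ_le_of_lt hlt
        have hre : ts.release c + ts.T j.1 ≤ r := by rw [hrelc, hrelj]; nlinarith
        have hD := ts.D_le_T c.1
        rw [hfst] at hD
        have hwr : S c + ts.C c.1 ≤ r := by
          have := ts.D_le_T j.1
          rw [hfst] at hIHc ⊢
          linarith
        refine ⟨S c + ts.C c.1, S c, hc3, hc4.le, by linarith, ?_, ?_⟩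
        · intro j₀ h1 h2 h3 h4; rw [huniq j₀ h1 h2 h3 h4]
        · intro _
          exact ⟨c, hc1, hfst, rfl, by rw [hfst], hc4⟩
    · refine ⟨b, b, le_refl b, le_refl b, by linarith, ?_, ?_⟩
      · intro j₀ h1 h2 h3 h4; exact absurd ⟨j₀, h1, h2, h3, h4⟩ hc
      · intro habs; exfalso; linarith
  -- the analysis window
  set v := min s (lo + t) with hvdef
  have hvs : v ≤ s := min_le_left _ _
  have hvlo : v ≤ lo + t := min_le_right _ _
  have hlor : lo ≤ r := hlob.trans hbr
  -- bound on job indices appearing in the window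
  set M : ℕ := (Finset.univ.sup fun i : Fin n => ⌈(lo + t) / ts.T i⌉₊) + 1 with hMdef
  have hM : ∀ p : Fin n × ℕ, ts.release p < lo + t → p.2 < M := by
    intro p hp
    have hφ := ts.phase_nonneg p.1
    have h1 : (p.2:ℝ) * ts.T p.1 < lo + t := by
      have : ts.release p = ts.phase p.1 + (p.2:ℝ) * ts.T p.1 := rfl
      linarith
    have h2 : (p.2:ℝ) < (lo + t) / ts.T p.1 := (lt_div_iff₀ (ts.T_pos p.1)).2 h1
    have h3 : (p.2:ℝ) ≤ (⌈(lo + t) / ts.T p.1⌉₊ : ℝ) := h2.le.trans (Nat.le_ceil _)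
    have h4 : p.2 ≤ ⌈(lo + t) / ts.T p.1⌉₊ := by exact_mod_cast h3
    have h5 := Finset.le_sup (f := fun i : Fin n => ⌈(lo + t) / ts.T i⌉₊) (Finset.mem_univ p.1)
    have h6 : ⌈(lo + t) / ts.T p.1⌉₊ ≤ Finset.univ.sup fun i : Fin n => ⌈(lo + t) / ts.T i⌉₊ := h5
    simp only [hMdef]
    omega
  set Efin : Finset (Fin n × ℕ) :=
    (Finset.univ ×ˢ Finset.range M).filter
      (fun p => (p.1:ℕ) < (j.1:ℕ) ∧ S p < v ∧ w < S p + ts.C p.1) with hEdef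
  have hmemE : ∀ p : Fin n × ℕ, (p.1:ℕ) < (j.1:ℕ) → S p < v → w < S p + ts.C p.1 →
      p ∈ Efin := by
    intro p h1 h2 h3
    refine Finset.mem_filter.2 ⟨Finset.mem_product.2 ⟨Finset.mem_univ _,
      Finset.mem_range.2 ?_⟩, h1, h2, h3⟩
    exact hM p (lt_of_le_of_lt (hsch.start_after_release p) (lt_of_lt_of_le h2 hvlo))
  have hEprop : ∀ p ∈ Efin, (p.1:ℕ) < (j.1:ℕ) ∧ S p < v ∧ w < S p + ts.C p.1 :=
    fun p hp => (Finset.mem_filter.1 hp).2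
  have hrelE : ∀ p ∈ Efin, lo ≤ ts.release p ∧ ts.release p < lo + t := by
    intro p hp
    obtain ⟨h1, h2, h3⟩ := hEprop p hp
    constructor
    · by_contra h4
      push_neg at h4
      have h5 := hbq p h1 (lt_of_lt_of_le h4 hlob)
      linarith
    · exact lt_of_le_of_lt (hsch.start_after_release p) (lt_of_lt_of_le h2 hvlo)
  -- covering of the window by higher-priority executions
  have hcov : Set.Ioo w v ⊆ ⋃ p ∈ Efin, Set.Ico (S p) (min (S p + ts.C p.1) v) := by
    intro x hx
    obtain ⟨hx1, hx2⟩ := hx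
    obtain ⟨j₀, h1, h2⟩ := busy x (lt_of_le_of_lt hbw hx1) (lt_of_lt_of_le hx2 hvs)
    rcases lt_or_ge (j₀.1:ℕ) (j.1:ℕ) with h3 | h3
    · have hmem := hmemE j₀ h3 (lt_of_le_of_lt h1 hx2) (lt_trans hx1 h2)
      exact Set.mem_biUnion hmem ⟨h1, lt_min h2 hx2⟩
    · exfalso
      by_cases h4 : j₀ = j
      · rw [h4] at h1
        have := lt_of_lt_of_le hx2 hvs
        rw [← hsdef] at h1
        linarith
      · rcases le_or_gt (S j₀) b with h5 | h5
        · have h6 := hB₁ j₀ h4 h3 h5 (lt_trans (lt_of_le_of_lt hbw hx1) h2)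
          linarith
        · exact noStart j₀ h4 h3 h5 (lt_of_le_of_lt h1 (lt_of_lt_of_le hx2 hvs))
            (lt_of_le_of_lt h1 (lt_of_lt_of_le hx2 (hvlo.trans (by linarith))))
  have hgle : ∀ p ∈ Efin, S p ≤ min (S p + ts.C p.1) v := fun p hp =>
    le_min (by linarith [ts.C_pos p.1]) (hEprop p hp).2.1.le
  have hcov2 : v - w ≤ ∑ p ∈ Efin, (min (S p + ts.C p.1) v - S p) :=
    vol_cover Efin _ _ w v hgle hcov
  have hsum1 : ∑ p ∈ Efin, (min (S p + ts.C p.1) v - S p) ≤ ∑ p ∈ Efin, ts.C p.1 :=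
    Finset.sum_le_sum (fun p hp => by
      have := min_le_left (S p + ts.C p.1) v; linarith)
  -- grouping by task
  set HPfin := Finset.univ.filter (fun i : Fin n => i < j.1) with hHPdef
  set cardf : Fin n → ℕ := fun i => (Efin.filter (fun p => p.1 = i)).card with hcarddef
  have hfiber : ∑ p ∈ Efin, ts.C p.1 = ∑ i ∈ HPfin, (cardf i : ℝ) * ts.C i := by
    rw [← Finset.sum_fiberwise_of_maps_to (g := Prod.fst) (t := HPfin)
      (fun p hp => Finset.mem_filter.2 ⟨Finset.mem_univ _, (hEprop p hp).1⟩)]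
    refine Finset.sum_congr rfl fun i _ => ?_
    have hinner : ∑ p ∈ Efin.filter (fun p => p.1 = i), ts.C p.1
        = ∑ _p ∈ Efin.filter (fun p => p.1 = i), ts.C i :=
      Finset.sum_congr rfl (fun p hp => by rw [(Finset.mem_filter.1 hp).2])
    rw [hinner, Finset.sum_const, nsmul_eq_mul]
  set A : Fin n → Finset ℕ := fun i => (Efin.filter (fun p => p.1 = i)).image Prod.snd
    with hAdef
  have hAcard : ∀ i, (A i).card = cardf i := by
    intro i
    apply Finset.card_image_of_injOn
    intro p hp q hq hpq
    exact Prod.ext ((Finset.mem_filter.1 hp).2.trans ((Finset.mem_filter.1 hq).2).symm) hpq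
  have hArel : ∀ i : Fin n, ∀ m ∈ A i,
      lo ≤ ts.phase i + (m:ℝ) * ts.T i ∧ ts.phase i + (m:ℝ) * ts.T i < lo + t := by
    intro i m hm
    obtain ⟨p, hp, hp2⟩ := Finset.mem_image.1 hm
    have h1 := (Finset.mem_filter.1 hp).2
    have h2 := hrelE p (Finset.mem_filter.1 hp).1
    rw [PeriodicTaskSet.release] at h2
    rw [← h1, ← hp2]
    exact h2
  have hcount : ∀ i ∈ HPfin, (cardf i : ℝ) ≤ ((⌈t / ts.T i⌉:ℤ):ℝ) := by
    intro i _
    rw [← hAcard]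
    exact count_le (ts.T_pos i) ht0 (A i) (hArel i)
  have hsum2 : ∑ i ∈ HPfin, (cardf i:ℝ) * ts.C i ≤
      ∑ i ∈ HPfin, ((⌈t / ts.T i⌉:ℤ):ℝ) * ts.C i :=
    Finset.sum_le_sum fun i hi => mul_le_mul_of_nonneg_right (hcount i hi) (ts.C_pos i).le
  have hSig' : ∑ i ∈ HPfin, ((⌈t / ts.T i⌉:ℤ):ℝ) * ts.C i ≤ t - ts.C j.1 - Cmax := by
    rw [hHPdef]
    linarith [htest]
  have hvw : v ≤ w + (t - ts.C j.1) - Cmax := by linarith [hcov2, hsum1, hfiber ▸ hsum2]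
  rcases le_total s (lo + t) with hcase | hcase
  · -- the window reaches the start of j: contradiction with hs
    have hveq : v = s := min_eq_left hcase
    rw [hveq] at hvw
    linarith
  · -- the whole length-t window is busy before j starts
    have hveq : v = lo + t := min_eq_right hcase
    have hKK : lo + ts.C j.1 + Cmax ≤ w := by rw [hveq] at hvw; linarith
    obtain ⟨c, hc1, hcfst, hclo, hcw, hbwlt⟩ := hK hKK
    have hCmax_eq : Cmax = 0 := le_antisymm (by linarith) hCmax0
    have hwv : w ≤ v := by rw [hveq, hcw]; linarith
    -- all inequalities in the chain are equalities
    have hfibersum := hfiber ▸ hsum2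
    have hgsum : ∑ p ∈ Efin, (min (S p + ts.C p.1) v - S p) = ∑ p ∈ Efin, ts.C p.1 := by
      have h1 : t - ts.C j.1 ≤ ∑ p ∈ Efin, (min (S p + ts.C p.1) v - S p) := by
        have : v - w = t - ts.C j.1 := by rw [hveq, hcw]; ring
        linarith [hcov2]
      linarith [hsum1, hfibersum, hSig']
    have hfin : ∀ p ∈ Efin, S p + ts.C p.1 ≤ v := by
      intro p hp
      have hle : ∀ q ∈ Efin, min (S q + ts.C q.1) v - S q ≤ ts.C q.1 := fun q hq => by
        have := min_le_left (S q + ts.C q.1) v; linarith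
      have h2 := (Finset.sum_eq_sum_iff_of_le hle).1 hgsum p hp
      have h3 := min_le_right (S p + ts.C p.1) v
      linarith
    have hcsum : ∑ i ∈ HPfin, (cardf i:ℝ) * ts.C i =
        ∑ i ∈ HPfin, ((⌈t / ts.T i⌉:ℤ):ℝ) * ts.C i := by
      have h1 : t - ts.C j.1 ≤ ∑ i ∈ HPfin, (cardf i:ℝ) * ts.C i := by
        have : v - w = t - ts.C j.1 := by rw [hveq, hcw]; ring
        rw [← hfiber]
        linarith [hcov2, hsum1]
      linarith [hsum2, hSig']
    have hcardeq : ∀ i ∈ HPfin, (cardf i:ℝ) = ((⌈t / ts.T i⌉:ℤ):ℝ) := by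
      intro i hi
      have h2 := (Finset.sum_eq_sum_iff_of_le (fun i hi =>
        mul_le_mul_of_nonneg_right (hcount i hi) (ts.C_pos i).le)).1 hcsum i hi
      exact mul_right_cancel₀ (ne_of_gt (ts.C_pos i)) h2
    -- the processor is busy at v; analyze the job running there
    have hvu : v ≤ r + (t - ts.C j.1) := by linarith
    have hvlt_s : v < s := lt_of_le_of_lt hvu hs
    have hbv : b < v := lt_of_lt_of_le hbwlt hwv
    obtain ⟨j₁, hj₁, hj₂⟩ := busy v hbv hvlt_s
    have ht : 0 < t := by linarith
    rcases lt_or_ge (j₁.1:ℕ) (j.1:ℕ) with hcls | hcls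
    · -- a higher-priority job executes at v
      rcases lt_or_eq_of_le hj₁ with hS1 | hS1
      · -- it started before v: but all window jobs finished by v
        have hmem := hmemE j₁ hcls hS1 (by linarith)
        linarith [hfin j₁ hmem]
      · -- it starts exactly at v
        have hrel1 : ts.release j₁ ≤ v := by rw [← hS1]; exact hsch.start_after_release j₁
        have hHPmem : j₁.1 ∈ HPfin := Finset.mem_filter.2 ⟨Finset.mem_univ _, hcls⟩
        rcases lt_or_eq_of_le hrel1 with hr1 | hr1
        · -- released before v: one more release in [lo, lo+t) than the count allows
          have hrelb : b ≤ ts.release j₁ := by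
            by_contra h4
            push_neg at h4
            have h5 := hbq j₁ hcls h4
            linarith
          have hnm : j₁.2 ∉ A j₁.1 := by
            intro hmem
            obtain ⟨p, hp, hp2⟩ := Finset.mem_image.1 hmem
            have h5 := (Finset.mem_filter.1 hp).2
            have h6 : p = j₁ := Prod.ext h5 hp2
            rw [h6] at hp
            have h7 := (hEprop _ (Finset.mem_filter.1 hp).1).2.1
            rw [hS1] at h7
            exact lt_irrefl _ h7
          have hins : ∀ m ∈ insert j₁.2 (A j₁.1),
              lo ≤ ts.phase j₁.1 + (m:ℝ) * ts.T j₁.1 ∧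
              ts.phase j₁.1 + (m:ℝ) * ts.T j₁.1 < lo + t := by
            intro m hm
            rcases Finset.mem_insert.1 hm with heq | hm
            · subst heq
              have hrr : ts.release j₁ = ts.phase j₁.1 + (j₁.2:ℝ) * ts.T j₁.1 := rfl
              rw [← hrr]
              exact ⟨hlob.trans hrelb, by rw [← hveq]; exact hr1⟩
            · exact hArel j₁.1 m hm
          have hcl := count_le (ts.T_pos j₁.1) ht0 _ hins
          rw [Finset.card_insert_of_notMem hnm] at hcl
          have h6 := hcardeq j₁.1 hHPmem
          rw [← hAcard] at h6
          push_cast at hcl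
          linarith
        · -- released exactly at v = lo + t: forces a release exactly at lo = S c
          have hm₁ : ts.phase j₁.1 + (j₁.2:ℝ) * ts.T j₁.1 = lo + t := by
            have hrr : ts.release j₁ = ts.phase j₁.1 + (j₁.2:ℝ) * ts.T j₁.1 := rfl
            rw [← hrr, hr1, hveq]
          have h6 := hcardeq j₁.1 hHPmem
          rw [← hAcard] at h6
          obtain ⟨m', hm'A, hm'le⟩ := fresh_release (ts.T_pos j₁.1) ht (A j₁.1) j₁.2 hm₁
            (hArel j₁.1) (le_of_eq h6.symm)
          obtain ⟨p, hp, hp2⟩ := Finset.mem_image.1 hm'A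
          have hpfst := (Finset.mem_filter.1 hp).2
          have hpE := (Finset.mem_filter.1 hp).1
          have hrelp := hrelE p hpE
          have hple : ts.release p ≤ lo := by
            have hrr : ts.release p = ts.phase p.1 + (p.2:ℝ) * ts.T p.1 := rfl
            rw [hrr, hpfst, hp2]
            exact hm'le
          have hpk := (hEprop p hpE).1
          have hne_pc : p ≠ c := by
            intro he
            rw [he, hcfst] at hpk
            exact lt_irrefl _ hpk
          rcases lt_trichotomy (S p) (S c) with h7 | h7 | h7
          · have h8 := hsch.start_after_release p
            rw [hclo] at h7
            linarith [hrelp.1]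
          · rcases hsch.nonoverlap p c hne_pc with h8 | h8
            · linarith [ts.C_pos p.1]
            · linarith [ts.C_pos c.1]
          · have h8 := hfp c p (by rw [hclo]; exact hple) h7
            rw [hcfst] at h8
            omega
    · -- a job of priority ≥ k executes at v: impossible
      by_cases h4 : j₁ = j
      · rw [h4, ← hsdef] at hj₁
        linarith
      · rcases le_or_gt (S j₁) b with h5 | h5
        · have h6 := hB₁ j₁ h4 hcls h5 (by linarith)
          linarith
        · exact noStart j₁ h4 hcls h5 (lt_of_le_of_lt hj₁ hvlt_s) (by linarith)

/-- **Non-preemptive FP schedulability test.**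
If for every task `k` there is a `t_k` with `0 ≤ t_k ≤ D k` and
`t_k ≥ C k + max_{i>k} C i + ∑_{i<k} ⌈t_k/T i⌉ * C i`
(the maximum over the empty set being `0`, as `sSup ∅ = 0` in `ℝ`), then the
task set is schedulable under non-preemptive fixed-priority scheduling: in
every resulting schedule, for every phase vector, every job of every task
completes no later than its absolute deadline. -/
theorem np_fp_schedulability {n : ℕ} (ts : PeriodicTaskSet n)
    (h : ∀ k : Fin n, ∃ t : ℝ, 0 ≤ t ∧ t ≤ ts.D k ∧
        ts.C k + sSup (ts.C '' {i | k < i}) +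
          ∑ i ∈ Finset.univ.filter (fun i : Fin n => i < k),
            (⌈t / ts.T i⌉ : ℝ) * ts.C i ≤ t) :
    ∀ S : Fin n × ℕ → ℝ, ts.IsNPSchedule S → ts.IsFP S →
      ∀ j : Fin n × ℕ, S j + ts.C j.1 ≤ ts.release j + ts.D j.1 := by
  intro S hsch hfp
  have hfinite : ∀ x : ℝ, {j' : Fin n × ℕ | S j' < x}.Finite := by
    intro x
    apply Set.Finite.subset (Set.Finite.prod (Set.finite_univ (α := Fin n))
      (Set.finite_Iio ((Finset.univ.sup fun i : Fin n => ⌈x / ts.T i⌉₊) + 1)))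
    rintro ⟨i, m⟩ hm
    simp only [Set.mem_setOf_eq] at hm
    refine ⟨Set.mem_univ _, ?_⟩
    have h0 : ts.release (i, m) ≤ S (i, m) := hsch.start_after_release _
    have hφ := ts.phase_nonneg i
    have h1 : (m:ℝ) * ts.T i < x := by
      have hrr : ts.release (i, m) = ts.phase i + (m:ℝ) * ts.T i := rfl
      linarith
    have h2 : (m:ℝ) < x / ts.T i := (lt_div_iff₀ (ts.T_pos i)).2 h1
    have h3 : (m:ℝ) ≤ (⌈x / ts.T i⌉₊ : ℝ) := h2.le.trans (Nat.le_ceil _)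
    have h4 : m ≤ ⌈x / ts.T i⌉₊ := by exact_mod_cast h3
    have h5 := Finset.le_sup (f := fun i : Fin n => ⌈x / ts.T i⌉₊) (Finset.mem_univ i)
    have h6 : ⌈x / ts.T i⌉₊ ≤ Finset.univ.sup fun i : Fin n => ⌈x / ts.T i⌉₊ := h5
    simp only [Set.mem_Iio]
    omega
  suffices H : ∀ N : ℕ, ∀ j : Fin n × ℕ, {j' | S j' < S j}.ncard ≤ N →
      S j + ts.C j.1 ≤ ts.release j + ts.D j.1 from fun j => H _ j le_rfl
  intro N
  induction N with
  | zero =>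
    intro j hj
    apply main_step ts h S hsch hfp j
    intro j' hlt
    exfalso
    have h1 : 0 < {j'' | S j'' < S j}.ncard :=
      (Set.ncard_pos (hfinite (S j))).2 ⟨j', hlt⟩
    omega
  | succ N ih =>
    intro j hj
    apply main_step ts h S hsch hfp j
    intro j' hlt
    apply ih
    have hss : {j'' | S j'' < S j'} ⊂ {j'' | S j'' < S j} := by
      rw [Set.ssubset_def]
      constructor
      · intro x hx
        exact lt_trans hx hlt
      · intro hcon
        have h2 : j' ∈ {j'' | S j'' < S j'} := hcon hlt
        simp only [Set.mem_setOf_eq] at h2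
        exact lt_irrefl _ h2
    have := Set.ncard_lt_ncard hss (hfinite (S j))
    omega
end

section
/- Let n ≥ 1, let T_1,…,T_n > 0 and δ > 0 be reals with Σ_{j=1}^n δ/T_j < 1, and let C ≥ 0. Then the set S = { t ∈ ℝ : t > 0 and t ≥ C + Σ_{j=1}^n ⌈t/T_j⌉·δ } is nonempty and has a least element t_0; this t_0 satisfies t_0 ≥ C + Σ_{j=1}^n ⌈t_0/T_j⌉·δ and t_0 ≤ s for every s ∈ S. -/
/-- **Existence of the least solution of the release-overhead recurrence.**
Let `n ≥ 1`, `T_1, …, T_n > 0`, `δ > 0` with `∑_j δ / T_j < 1`, and `C ≥ 0`.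
Then the set `S = {t | t > 0 ∧ t ≥ C + ∑_j ⌈t/T_j⌉·δ}` is nonempty and has a
least element `t₀`; i.e. `t₀ ∈ S` (so `t₀ ≥ C + ∑_j ⌈t₀/T_j⌉·δ`) and
`t₀ ≤ s` for every `s ∈ S`. -/
theorem exists_least_overhead_fixed_point (n : ℕ) (hn : 1 ≤ n)
    (T : Fin n → ℝ) (δ C : ℝ) (hT : ∀ j, 0 < T j) (hδ : 0 < δ) (hC : 0 ≤ C)
    (hutil : ∑ j : Fin n, δ / T j < 1) :
    ∃ t₀ : ℝ, IsLeast
      {t : ℝ | 0 < t ∧ C + ∑ j : Fin n, (⌈t / T j⌉ : ℝ) * δ ≤ t} t₀ := by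
  set S : Set ℝ := {t : ℝ | 0 < t ∧ C + ∑ j : Fin n, (⌈t / T j⌉ : ℝ) * δ ≤ t} with hS
  set u : ℝ := ∑ j : Fin n, δ / T j with hu
  have hu0 : 0 ≤ u := Finset.sum_nonneg fun j _ => le_of_lt (div_pos hδ (hT j))
  -- S is bounded below by δ
  have hlb : ∀ t ∈ S, δ ≤ t := by
    intro t ht
    obtain ⟨htpos, hrec⟩ := ht
    have hsum : (n : ℝ) * δ ≤ ∑ j : Fin n, (⌈t / T j⌉ : ℝ) * δ := by
      have : ∀ j : Fin n, (1 : ℝ) * δ ≤ (⌈t / T j⌉ : ℝ) * δ := by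
        intro j
        have h1 : (1 : ℤ) ≤ ⌈t / T j⌉ := Int.one_le_ceil_iff.mpr (div_pos htpos (hT j))
        exact mul_le_mul_of_nonneg_right (by exact_mod_cast h1) hδ.le
      calc (n : ℝ) * δ = ∑ _j : Fin n, (1 : ℝ) * δ := by
            simp [Finset.sum_const, mul_comm]
        _ ≤ _ := Finset.sum_le_sum fun j _ => this j
    have hn1 : (1 : ℝ) ≤ (n : ℝ) := by exact_mod_cast hn
    nlinarith [mul_le_mul_of_nonneg_right hn1 hδ.le]
  -- S is nonempty
  have hne : S.Nonempty := by
    set t : ℝ := max 1 ((C + n * δ) / (1 - u)) with ht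
    refine ⟨t, ?_, ?_⟩
    · exact lt_of_lt_of_le one_pos (le_max_left _ _)
    · have htpos : (0:ℝ) < t := lt_of_lt_of_le one_pos (le_max_left _ _)
      have hbound : ∑ j : Fin n, (⌈t / T j⌉ : ℝ) * δ ≤ t * u + n * δ := by
        have : ∀ j : Fin n, (⌈t / T j⌉ : ℝ) * δ ≤ (t / T j + 1) * δ := by
          intro j
          exact mul_le_mul_of_nonneg_right (le_of_lt (Int.ceil_lt_add_one _)) hδ.le
        calc ∑ j : Fin n, (⌈t / T j⌉ : ℝ) * δ
            ≤ ∑ j : Fin n, (t / T j + 1) * δ := Finset.sum_le_sum fun j _ => this j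
          _ = t * u + n * δ := by
              simp only [add_mul, one_mul, Finset.sum_add_distrib, Finset.sum_const,
                Finset.card_univ, Fintype.card_fin, nsmul_eq_mul]
              rw [hu, Finset.mul_sum]
              congr 1
              refine Finset.sum_congr rfl fun j _ => ?_
              field_simp
      have h1u : 0 < 1 - u := by linarith
      have hge : (C + n * δ) / (1 - u) ≤ t := le_max_right _ _
      have : C + n * δ ≤ t * (1 - u) := by
        rw [div_le_iff₀ h1u] at hge; linarith
      nlinarith
  have hbdd : BddBelow S := ⟨δ, hlb⟩
  refine ⟨sInf S, ⟨?_, ?_⟩, fun s hs => csInf_le hbdd hs⟩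
  · have : δ ≤ sInf S := le_csInf hne hlb
    linarith
  · refine le_of_forall_pos_le_add ?_
    intro ε hε
    obtain ⟨t, htS, htlt⟩ := exists_lt_of_csInf_lt hne (lt_add_of_pos_right (sInf S) hε)
    have hle : sInf S ≤ t := csInf_le hbdd htS
    have hmono : ∑ j : Fin n, (⌈sInf S / T j⌉ : ℝ) * δ ≤ ∑ j : Fin n, (⌈t / T j⌉ : ℝ) * δ := by
      refine Finset.sum_le_sum fun j _ => ?_
      have : ⌈sInf S / T j⌉ ≤ ⌈t / T j⌉ :=
        Int.ceil_le_ceil (by gcongr; exact (hT j).le)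
      exact mul_le_mul_of_nonneg_right (by exact_mod_cast this) hδ.le
    have := htS.2
    linarith
end

section
/- Let τ_1,…,τ_n be periodic tasks with constrained deadlines (D_j ≤ T_j for all j), and consider a non-preemptive uniprocessor schedule of these tasks in which every job completes no later than its absolute deadline. If a job of some task τ_i executes continuously throughout an interval [s, f], then for every task τ_j ≠ τ_i the half-open interval [s, f) contains at most one release time of τ_j. -/
open scoped BigOperators

lemma np_release_key {n : ℕ}
    (ts : PeriodicTaskSet n) (S : Fin n × ℕ → ℝ) (hS : ts.IsNPSchedule S)
    (hdl : ∀ j : Fin n × ℕ, S j + ts.C j.1 ≤ ts.release j + ts.D j.1)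
    (i : Fin n) (s f : ℝ)
    (m : ℕ) (hm1 : S (i, m) ≤ s) (hm2 : f ≤ S (i, m) + ts.C i)
    (j : Fin n) (hji : j ≠ i) (k k' : ℕ) (hkk : k < k')
    (hk : ts.release (j, k) ∈ Set.Ico s f)
    (hk' : ts.release (j, k') ∈ Set.Ico s f) : False := by
  have hTj := ts.T_pos j
  have hrel : ts.release (j, k) + ts.T j ≤ ts.release (j, k') := by
    have : ((k : ℝ) + 1) * ts.T j ≤ (k' : ℝ) * ts.T j := by
      apply mul_le_mul_of_nonneg_right _ hTj.le
      have : (k : ℝ) + 1 ≤ (k' : ℝ) := by exact_mod_cast hkk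
      linarith
    simp only [PeriodicTaskSet.release]
    push_cast
    linarith
  -- job (j,k) must finish strictly before f
  have hfin : S (j, k) + ts.C j < f := by
    have h1 := hdl (j, k)
    have h2 := ts.D_le_T j
    have := hk'.2
    simp only at h1
    linarith
  have hstart : s ≤ S (j, k) := le_trans hk.1 (hS.start_after_release (j, k))
  have hCj := ts.C_pos j
  have hCi := ts.C_pos i
  rcases hS.nonoverlap (j, k) (i, m) (by simp [hji]) with h | h
  · simp only at h; linarith
  · simp only at h; linarith

/-- **At most one release of any other task during a non-preemptive execution
interval, given constrained deadlines and met deadlines.**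
Consider periodic tasks with constrained deadlines (`D j ≤ T j`, part of
`PeriodicTaskSet`) and a non-preemptive uniprocessor schedule in which every
job completes no later than its absolute deadline. If a job of task `i`
executes continuously throughout the interval `[s, f]`, then for every task
`j ≠ i` the half-open interval `[s, f)` contains at most one release time of
task `j`. -/
theorem at_most_one_release_during_np_execution {n : ℕ}
    (ts : PeriodicTaskSet n) (S : Fin n × ℕ → ℝ) (hS : ts.IsNPSchedule S)
    (hdl : ∀ j : Fin n × ℕ, S j + ts.C j.1 ≤ ts.release j + ts.D j.1)
    (i : Fin n) (s f : ℝ) (hsf : s ≤ f)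
    (hexec : ∃ m : ℕ, S (i, m) ≤ s ∧ f ≤ S (i, m) + ts.C i) :
    ∀ j : Fin n, j ≠ i → ∀ k k' : ℕ,
      ts.release (j, k) ∈ Set.Ico s f → ts.release (j, k') ∈ Set.Ico s f →
      k = k' := by
  obtain ⟨m, hm1, hm2⟩ := hexec
  intro j hji k k' hk hk'
  rcases lt_trichotomy k k' with h | h | h
  · exact absurd (np_release_key ts S hS hdl i s f m hm1 hm2 j hji k k' h hk hk') (by simp)
  · exact h
  · exact absurd (np_release_key ts S hS hdl i s f m hm1 hm2 j hji k' k h hk' hk) (by simp)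
end
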